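/- For every integer k ≥ 3, in every proper (k+1)-coloring of the graph G_k, the four vertices u, u', v, v' all receive the same color. -/

import Mathlib

open SimpleGraph

/-- The vertices of the gadget `G_k`: three cliques `U`, `W` (called `V` in the paper)
and `M` of size `k` each (the distinguished vertex `w` of `M` is `M i` with `i.val = 0`),
together with four special vertices `u, u', v, v'`. -/
inductive GkVert (k : ℕ) where
  | U : Fin k → GkVert k
  | W : Fin k → GkVert k
  | M : Fin k → GkVert k
  | u : GkVert k
  | u' : GkVert k
  | v : GkVert k
  | v' : GkVert k
deriving DecidableEq

/-- The gadget `G_k`: `U`, `W` and `M` are cliques, `u` and `u'` are complete to `U`,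
`v` and `v'` are complete to `W`, `u` and `v` are complete to `M ∖ {w}`, and
`u'` and `v'` are adjacent to `w` (where `w` is the vertex `M i` with `i.val = 0`). -/
def Gk (k : ℕ) : SimpleGraph (GkVert k) :=
  SimpleGraph.fromRel (fun a b =>
    (∃ i j, a = GkVert.U i ∧ b = GkVert.U j) ∨
    (∃ i j, a = GkVert.W i ∧ b = GkVert.W j) ∨
    (∃ i j, a = GkVert.M i ∧ b = GkVert.M j) ∨
    (∃ i, a = GkVert.u ∧ b = GkVert.U i) ∨
    (∃ i, a = GkVert.u' ∧ b = GkVert.U i) ∨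
    (∃ i, a = GkVert.v ∧ b = GkVert.W i) ∨
    (∃ i, a = GkVert.v' ∧ b = GkVert.W i) ∨
    (∃ i : Fin k, i.val ≠ 0 ∧ a = GkVert.u ∧ b = GkVert.M i) ∨
    (∃ i : Fin k, i.val ≠ 0 ∧ a = GkVert.v ∧ b = GkVert.M i) ∨
    (∃ i : Fin k, i.val = 0 ∧ a = GkVert.u' ∧ b = GkVert.M i) ∨
    (∃ i : Fin k, i.val = 0 ∧ a = GkVert.v' ∧ b = GkVert.M i))


/-!
The `k` vertices of a `k`-clique use all but one of the `k + 1` colours, so any two vertices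
that avoid the colours of the clique share the remaining one. Applied to the clique `U` this
gives `c(u) = c(u')`, and to `V` it gives `c(v) = c(v')`. Then `u` avoids the colours of
`M ∖ {w}` by adjacency and the colour of `w` because `c(u) = c(u')`; the same holds for `v`,
so the clique `M` forces `c(u) = c(v)`.
-/

theorem Function.Injective.eq_of_forall_ne {ι α : Type*} [Fintype ι] [Fintype α]
    (hcard : Fintype.card α = Fintype.card ι + 1) {g : ι → α} (hg : g.Injective) {a b : α}
    (ha : ∀ i, g i ≠ a) (hb : ∀ i, g i ≠ b) : a = b := by
  classical
  have hcompl : (Finset.univ.image g)ᶜ.card ≤ 1 := by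
    rw [Finset.card_compl, Finset.card_image_of_injective _ hg, Finset.card_univ]
    omega
  exact Finset.card_le_one.mp hcompl a (by simpa using ha) b (by simpa using hb)

theorem SimpleGraph.Coloring.eq_of_forall_ne_of_pairwise_adj {V ι α : Type*}
    {G : SimpleGraph V} [Fintype ι] [Fintype α] (C : G.Coloring α)
    (hcard : Fintype.card α = Fintype.card ι + 1) {f : ι → V}
    (hf : Pairwise fun i j ↦ G.Adj (f i) (f j)) {a b : α}
    (ha : ∀ i, C (f i) ≠ a) (hb : ∀ i, C (f i) ≠ b) : a = b :=
  (C.injective_comp_of_pairwise_adj f hf).eq_of_forall_ne hcard ha hb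

namespace Gk

variable {k : ℕ}

theorem pairwise_adj_U : Pairwise fun i j : Fin k ↦ (Gk k).Adj (.U i) (.U j) :=
  fun _ _ h ↦ by simp [Gk, h]

theorem pairwise_adj_W : Pairwise fun i j : Fin k ↦ (Gk k).Adj (.W i) (.W j) :=
  fun _ _ h ↦ by simp [Gk, h]

theorem pairwise_adj_M : Pairwise fun i j : Fin k ↦ (Gk k).Adj (.M i) (.M j) :=
  fun _ _ h ↦ by simp [Gk, h]

theorem adj_U_u (i : Fin k) : (Gk k).Adj (.U i) .u := by simp [Gk]

theorem adj_U_u' (i : Fin k) : (Gk k).Adj (.U i) .u' := by simp [Gk]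

theorem adj_W_v (i : Fin k) : (Gk k).Adj (.W i) .v := by simp [Gk]

theorem adj_W_v' (i : Fin k) : (Gk k).Adj (.W i) .v' := by simp [Gk]

theorem adj_M_u {i : Fin k} (hi : i.val ≠ 0) : (Gk k).Adj (.M i) .u := by simp [Gk, hi]

theorem adj_M_v {i : Fin k} (hi : i.val ≠ 0) : (Gk k).Adj (.M i) .v := by simp [Gk, hi]

theorem adj_M_u' {i : Fin k} (hi : i.val = 0) : (Gk k).Adj (.M i) .u' := by simp [Gk, hi]

theorem adj_M_v' {i : Fin k} (hi : i.val = 0) : (Gk k).Adj (.M i) .v' := by simp [Gk, hi]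

variable {α : Type*} (C : (Gk k).Coloring α)

theorem coloring_M_ne_u (h : C .u = C .u') (i : Fin k) : C (.M i) ≠ C .u := by
  rcases eq_or_ne i.val 0 with hi | hi
  · rw [h]
    exact C.valid (adj_M_u' hi)
  · exact C.valid (adj_M_u hi)

theorem coloring_M_ne_v (h : C .v = C .v') (i : Fin k) : C (.M i) ≠ C .v := by
  rcases eq_or_ne i.val 0 with hi | hi
  · rw [h]
    exact C.valid (adj_M_v' hi)
  · exact C.valid (adj_M_v hi)

end Gk

theorem statement3_general (k : ℕ) (C : (Gk k).Coloring (Fin (k + 1))) :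
    C GkVert.u = C GkVert.u' ∧ C GkVert.u = C GkVert.v ∧ C GkVert.u = C GkVert.v' := by
  have hcard : Fintype.card (Fin (k + 1)) = Fintype.card (Fin k) + 1 := by simp
  have huu' : C .u = C .u' := C.eq_of_forall_ne_of_pairwise_adj hcard Gk.pairwise_adj_U
    (fun i ↦ C.valid (Gk.adj_U_u i)) (fun i ↦ C.valid (Gk.adj_U_u' i))
  have hvv' : C .v = C .v' := C.eq_of_forall_ne_of_pairwise_adj hcard Gk.pairwise_adj_W
    (fun i ↦ C.valid (Gk.adj_W_v i)) (fun i ↦ C.valid (Gk.adj_W_v' i))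
  have huv : C .u = C .v := C.eq_of_forall_ne_of_pairwise_adj hcard Gk.pairwise_adj_M
    (Gk.coloring_M_ne_u C huu') (Gk.coloring_M_ne_v C hvv')
  exact ⟨huu', huv, huv.trans hvv'⟩

theorem statement3 (k : ℕ) (hk : 3 ≤ k) (C : (Gk k).Coloring (Fin (k + 1))) :
    C GkVert.u = C GkVert.u' ∧ C GkVert.u = C GkVert.v ∧ C GkVert.u = C GkVert.v' :=
  statement3_general k C
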